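/- In the middle order P_n viewed as a Heyting algebra, for permutations v, w with inversion sequences (x_i), (y_i), the relative pseudocomplement v ⇝ w = max{z : v ∧ z ≤ w} has inversion sequence z_i = i−1 if x_i ≤ y_i and z_i = y_i if x_i > y_i. Moreover, a permutation v is a regular element (v = ¬¬v, where ¬v := v ⇝ e_n) if and only if for every i, either x_i = 0 or x_i = i−1; equivalently, v avoids both patterns 132 and 231. -/

import Mathlib

/-- The inversion sequence of a permutation `w` of `Fin n` (0-indexed values):
`invSeq w i` counts the values `j < i` appearing after `i` in one-line notation. -/
def invSeq {n : ℕ} (w : Equiv.Perm (Fin n)) (i : Fin n) : ℕ :=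
  (Finset.univ.filter (fun j : Fin n => j < i ∧ w.symm i < w.symm j)).card

/-- The middle order on permutations: coordinate-wise comparison of inversion sequences. -/
def midLe {n : ℕ} (v w : Equiv.Perm (Fin n)) : Prop :=
  ∀ i, invSeq v i ≤ invSeq w i

/-- `p` is the pseudocomplement of `v` in the middle order (the meet being computed
coordinate-wise on inversion sequences, and the minimum being the identity, whose
inversion sequence is zero): `p` is the largest `z` with `v ∧ z = e_n`. -/
def IsPseudocomplement {n : ℕ} (v p : Equiv.Perm (Fin n)) : Prop :=
  (∀ i, min (invSeq v i) (invSeq p i) = 0) ∧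
  ∀ u : Equiv.Perm (Fin n), (∀ i, min (invSeq v i) (invSeq u i) = 0) → midLe u p

/-- `w` avoids the pattern 132. -/
def Avoids132 {n : ℕ} (w : Equiv.Perm (Fin n)) : Prop :=
  ¬ ∃ i j k : Fin n, i < j ∧ j < k ∧ w i < w k ∧ w k < w j

/-- `w` avoids the pattern 231. -/
def Avoids231 {n : ℕ} (w : Equiv.Perm (Fin n)) : Prop :=
  ¬ ∃ i j k : Fin n, i < j ∧ j < k ∧ w k < w i ∧ w i < w j

/-!
The inversion sequence is a bijection from `S_n` onto `∏ i, {0, …, i}` (it is injective because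
the code of `i` fixes where `i` sits relative to the smaller values, and both sides have `n!`
elements), so `P_n` is a product of chains and its Heyting operations are computed coordinatewise.
In a chain `a ⇝ b` is the top if `a ≤ b` and `b` otherwise; hence `¬a` is the top if `a = 0` and
`0` otherwise, and `a = ¬¬a` exactly when `a` is `0` or the top. The code of the value `c` is
neither `0` nor `c` iff some smaller value lies on each side of `c`, i.e. iff `c` is the largest
letter of an occurrence of `132` or `231`.
-/

open Finset Function Equiv

theorem Finset.filter_eq_filter_of_card_eq {α β : Type*} [LinearOrder β] (f : α → β)
    {s : Finset α} (hf : Set.InjOn f s) {p q : α → Prop} [DecidablePred p] [DecidablePred q]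
    (hp : ∀ a ∈ s, ∀ b ∈ s, f a < f b → p a → p b)
    (hq : ∀ a ∈ s, ∀ b ∈ s, f a < f b → q a → q b)
    (hcard : #(s.filter p) = #(s.filter q)) : s.filter p = s.filter q := by
  have hnested : s.filter p ⊆ s.filter q ∨ s.filter q ⊆ s.filter p := by
    by_contra! h
    obtain ⟨⟨a, hpa, hqa⟩, ⟨b, hqb, hpb⟩⟩ := And.imp not_subset.mp not_subset.mp h
    simp only [mem_filter, not_and] at hpa hqa hqb hpb
    rcases lt_trichotomy (f a) (f b) with hab | hab | hab
    · exact hpb hqb.1 (hp a hpa.1 b hqb.1 hab hpa.2)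
    · exact hpb hqb.1 (hf hpa.1 hqb.1 hab ▸ hpa.2)
    · exact hqa hpa.1 (hq b hqb.1 a hpa.1 hab hqb.2)
  rcases hnested with h | h
  · exact eq_of_subset_of_card_le h hcard.ge
  · exact (eq_of_subset_of_card_le h hcard.le).symm

variable {n : ℕ}

theorem invSeq_eq_card_filter_Iio (w : Perm (Fin n)) (i : Fin n) :
    invSeq w i = #((Iio i).filter fun j => w.symm i < w.symm j) := by
  unfold invSeq
  congr 1
  ext j
  simp

theorem invSeq_le (w : Perm (Fin n)) (i : Fin n) : invSeq w i ≤ i := by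
  rw [invSeq_eq_card_filter_Iio, ← Fin.card_Iio i]
  exact card_filter_le _ _

theorem symm_lt_symm_iff_of_invSeq_eq {v w : Perm (Fin n)} (h : invSeq v = invSeq w)
    (j k : Fin n) : v.symm j < v.symm k ↔ w.symm j < w.symm k := by
  suffices H : ∀ m : ℕ, ∀ j k : Fin n, (j : ℕ) < m → (k : ℕ) < m →
      (v.symm j < v.symm k ↔ w.symm j < w.symm k) from H n j k j.2 k.2
  intro m
  induction m with
  | zero => intro j k hj; omega
  | succ m ih =>
    -- The inversions at the value `m` form an upper set for the relative order of the smaller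
    -- values, on which `v` and `w` agree, and upper sets of a chain are determined by their size.
    have hinv : ∀ i : Fin n, (i : ℕ) = m → ∀ j < i,
        (v.symm i < v.symm j ↔ w.symm i < w.symm j) := by
      intro i hi j hj
      have hsmall : ∀ a ∈ Iio i, (a : ℕ) < m := fun a ha => hi ▸ Fin.lt_def.mp (mem_Iio.mp ha)
      have hsets := filter_eq_filter_of_card_eq v.symm v.symm.injective.injOn
        (p := (v.symm i < v.symm ·)) (q := (w.symm i < w.symm ·))
        (fun a _ b _ hab hia => hia.trans hab)
        (fun a ha b hb hab hia => hia.trans ((ih a b (hsmall a ha) (hsmall b hb)).mp hab))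
        (by rw [← invSeq_eq_card_filter_Iio, ← invSeq_eq_card_filter_Iio, h])
      simpa [hj] using congrArg (j ∈ ·) hsets
    intro j k hj hk
    rcases Nat.lt_succ_iff_lt_or_eq.mp hj with hj | hj <;>
      rcases Nat.lt_succ_iff_lt_or_eq.mp hk with hk | hk
    · exact ih j k hj hk
    · have hjk : j < k := Fin.lt_def.mpr (by omega)
      rw [← not_iff_not, not_lt, not_lt, (v.symm.injective.ne hjk.ne').le_iff_lt,
        (w.symm.injective.ne hjk.ne').le_iff_lt]
      exact hinv k hk j hjk
    · exact hinv j hj k (Fin.lt_def.mpr (by omega))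
    · obtain rfl : j = k := Fin.ext (hj.trans hk.symm)
      simp only [lt_irrefl]

theorem invSeq_injective : Injective (invSeq : Perm (Fin n) → Fin n → ℕ) := by
  intro v w h
  have hmono : StrictMono (w.symm ∘ v) := fun a b hab => by
    simpa using (symm_lt_symm_iff_of_invSeq_eq h (v a) (v b)).mp (by simpa using hab)
  refine Equiv.ext fun a => ?_
  simpa using congrArg w (hmono.apply_eq (x := a))

theorem exists_invSeq_eq (c : Fin n → ℕ) (hc : ∀ i, c i ≤ i) :
    ∃ w : Perm (Fin n), invSeq w = c := by
  let code : Perm (Fin n) → (i : Fin n) → Fin (i + 1) :=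
    fun w i => ⟨invSeq w i, Nat.lt_succ_of_le (invSeq_le w i)⟩
  have hinj : Injective code := fun v w h =>
    invSeq_injective (funext fun i => congrArg Fin.val (congrFun h i))
  have hcard : Fintype.card (Perm (Fin n)) = Fintype.card ((i : Fin n) → Fin (i + 1)) := by
    rw [Fintype.card_perm, Fintype.card_pi, Fintype.card_fin]
    simp only [Fintype.card_fin]
    rw [Fin.prod_univ_eq_prod_range (· + 1) n, prod_range_add_one_eq_factorial]
  obtain ⟨w, hw⟩ := ((Fintype.bijective_iff_injective_and_card code).mpr ⟨hinj, hcard⟩).2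
    fun i => ⟨c i, Nat.lt_succ_of_le (hc i)⟩
  exact ⟨w, funext fun i => congrArg Fin.val (congrFun hw i)⟩

theorem exists_himp_invSeq (v w : Perm (Fin n)) :
    ∃ r : Perm (Fin n),
      (∀ i : Fin n, invSeq r i = if invSeq v i ≤ invSeq w i then (i : ℕ) else invSeq w i) ∧
      (∀ i, min (invSeq v i) (invSeq r i) ≤ invSeq w i) ∧
      ∀ u : Perm (Fin n), (∀ i, min (invSeq v i) (invSeq u i) ≤ invSeq w i) → midLe u r := by
  obtain ⟨r, hr⟩ := exists_invSeq_eq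
    (fun i => if invSeq v i ≤ invSeq w i then (i : ℕ) else invSeq w i)
    (fun i => by split_ifs; exacts [le_rfl, invSeq_le w i])
  refine ⟨r, congrFun hr, fun i => ?_, fun u hu i => ?_⟩
  · rw [congrFun hr i]
    split_ifs <;> omega
  · have hui := hu i
    have := invSeq_le u i
    rw [congrFun hr i]
    split_ifs <;> omega

theorem IsPseudocomplement.invSeq_eq {v p : Perm (Fin n)} (h : IsPseudocomplement v p)
    (i : Fin n) : invSeq p i = if invSeq v i = 0 then (i : ℕ) else 0 := by
  obtain ⟨u, hu⟩ := exists_invSeq_eq (fun j => if invSeq v j = 0 then (j : ℕ) else 0)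
    (fun j => by split_ifs <;> simp)
  have hdisj : ∀ j, min (invSeq v j) (invSeq u j) = 0 := fun j => by
    rw [congrFun hu j]
    split_ifs <;> simp_all
  have hle := h.2 u hdisj i
  have hpdisj := h.1 i
  have := invSeq_le p i
  rw [congrFun hu i] at hle
  split_ifs at hle ⊢ <;> omega

theorem eq_iff_of_isPseudocomplement {v p q : Perm (Fin n)} (hp : IsPseudocomplement v p)
    (hq : IsPseudocomplement p q) : v = q ↔ ∀ i : Fin n, invSeq v i = 0 ∨ invSeq v i = i := by
  rw [← invSeq_injective.eq_iff, funext_iff]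
  refine forall_congr' fun i => ?_
  rw [hq.invSeq_eq, hp.invSeq_eq]
  have := invSeq_le v i
  split_ifs <;> omega

theorem invSeq_pos_iff (w : Perm (Fin n)) (i : Fin n) :
    0 < invSeq w i ↔ ∃ j < i, w.symm i < w.symm j := by
  simp only [invSeq_eq_card_filter_Iio, card_pos, filter_nonempty_iff, mem_Iio]

theorem invSeq_lt_iff (w : Perm (Fin n)) (i : Fin n) :
    invSeq w i < i ↔ ∃ j < i, w.symm j < w.symm i := by
  rw [invSeq_eq_card_filter_Iio, ← Fin.card_Iio i, (card_filter_le _ _).lt_iff_ne,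
    Ne, card_filter_eq_iff]
  push Not
  simp only [mem_Iio]
  exact exists_congr fun j => and_congr_right fun hj => (w.symm.injective.ne hj.ne).le_iff_lt

theorem avoids132_and_avoids231_iff_not_exists_peak (v : Perm (Fin n)) :
    Avoids132 v ∧ Avoids231 v ↔ ¬ ∃ i j k : Fin n, i < j ∧ j < k ∧ v i < v j ∧ v k < v j := by
  rw [Avoids132, Avoids231, ← not_or, not_iff_not]
  constructor
  · rintro (⟨i, j, k, hij, hjk, hik, hkj⟩ | ⟨i, j, k, hij, hjk, hki, hij'⟩)
    · exact ⟨i, j, k, hij, hjk, hik.trans hkj, hkj⟩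
    · exact ⟨i, j, k, hij, hjk, hij', hki.trans hij'⟩
  · rintro ⟨i, j, k, hij, hjk, hij', hkj⟩
    rcases (v.injective.ne (hij.trans hjk).ne).lt_or_gt with hik | hki
    · exact Or.inl ⟨i, j, k, hij, hjk, hik, hkj⟩
    · exact Or.inr ⟨i, j, k, hij, hjk, hki, hij'⟩

theorem exists_peak_iff_exists_invSeq_pos_lt (v : Perm (Fin n)) :
    (∃ i j k : Fin n, i < j ∧ j < k ∧ v i < v j ∧ v k < v j) ↔
      ∃ c : Fin n, 0 < invSeq v c ∧ invSeq v c < c := by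
  simp only [invSeq_pos_iff, invSeq_lt_iff]
  constructor
  · rintro ⟨i, j, k, hij, hjk, hij', hkj⟩
    exact ⟨v j, ⟨v k, hkj, by simpa using hjk⟩, ⟨v i, hij', by simpa using hij⟩⟩
  · rintro ⟨c, ⟨d, hdc, hcd⟩, ⟨b, hbc, hbc'⟩⟩
    exact ⟨v.symm b, v.symm c, v.symm d, hbc', hcd, by simpa using hbc, by simpa using hdc⟩

theorem avoids132_and_avoids231_iff_invSeq (v : Perm (Fin n)) :
    Avoids132 v ∧ Avoids231 v ↔ ∀ i : Fin n, invSeq v i = 0 ∨ invSeq v i = i := by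
  rw [avoids132_and_avoids231_iff_not_exists_peak, exists_peak_iff_exists_invSeq_pos_lt, not_exists]
  refine forall_congr' fun i => ?_
  have := invSeq_le v i
  omega

/-- In the Heyting algebra structure of the middle order, the relative pseudocomplement
`v ⇝ w` has inversion sequence `z_i = i - 1` if `x_i ≤ y_i` and `z_i = y_i` otherwise
(0-indexed: `z_i = i`); and `v` is regular (`v = ¬¬v`) iff each `x_i` is `0` or `i - 1`
(0-indexed: `i`), iff `v` avoids both `132` and `231`. -/
theorem middle_order_heyting (n : ℕ) (v w : Equiv.Perm (Fin n)) :
    (∃ r : Equiv.Perm (Fin n),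
      (∀ i : Fin n, invSeq r i =
        if invSeq v i ≤ invSeq w i then (i : ℕ) else invSeq w i) ∧
      (∀ i, min (invSeq v i) (invSeq r i) ≤ invSeq w i) ∧
      (∀ u : Equiv.Perm (Fin n),
        (∀ i, min (invSeq v i) (invSeq u i) ≤ invSeq w i) → midLe u r)) ∧
    (∀ p q : Equiv.Perm (Fin n), IsPseudocomplement v p → IsPseudocomplement p q →
      ((v = q ↔ ∀ i : Fin n, invSeq v i = 0 ∨ invSeq v i = (i : ℕ)) ∧
       (v = q ↔ Avoids132 v ∧ Avoids231 v))) := by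
  refine ⟨exists_himp_invSeq v w, fun p q hp hq => ?_⟩
  have hregular := eq_iff_of_isPseudocomplement hp hq
  exact ⟨hregular, hregular.trans (avoids132_and_avoids231_iff_invSeq v).symm⟩
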